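/- Let X and T be finitely generated free ℤ-modules, let K ⊆ X be a submodule such that A := X/K is finite, let h : X → A be the canonical projection, and let f : T → A be a surjective homomorphism. Let ψ₁, ψ₂, ψ, ζ be automorphisms of A with ψ₁ = ζ ∘ ψ₂ ∘ ψ, and suppose there exist automorphisms ζ̃ of X and ψ̃ of T with ζ ∘ h = h ∘ ζ̃ and ψ ∘ f = f ∘ ψ̃. Then the map (x, t) ↦ (ζ̃⁻¹(x), ψ̃(t)) defines a ℤ-module isomorphism from the fibre product {(x, t) ∈ X ⊕ T : h(x) = ψ₁(f(t))} onto the fibre product {(x, t) ∈ X ⊕ T : h(x) = ψ₂(f(t))}. -/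

import Mathlib

/-- The fibre product `X₁ ⊕_A X₂` of two module homomorphisms `h₁ : X₁ → A`,
`h₂ : X₂ → A`, as a submodule of `X₁ × X₂`. -/
def fibreProd {R X₁ X₂ A : Type*} [Semiring R] [AddCommMonoid X₁] [AddCommMonoid X₂]
    [AddCommMonoid A] [Module R X₁] [Module R X₂] [Module R A]
    (h₁ : X₁ →ₗ[R] A) (h₂ : X₂ →ₗ[R] A) : Submodule R (X₁ × X₂) where
  carrier := {p | h₁ p.1 = h₂ p.2}
  add_mem' := by
    intro a b ha hb
    simp only [Set.mem_setOf_eq, Prod.fst_add, Prod.snd_add, map_add] at *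
    rw [ha, hb]
  zero_mem' := by simp
  smul_mem' := by
    intro c a ha
    simp only [Set.mem_setOf_eq, Prod.smul_fst, Prod.smul_snd, map_smul] at *
    rw [ha]

/-- The first projection `p₁` of the fibre product. -/
def fpFst {R X₁ X₂ A : Type*} [Semiring R] [AddCommMonoid X₁] [AddCommMonoid X₂]
    [AddCommMonoid A] [Module R X₁] [Module R X₂] [Module R A]
    (h₁ : X₁ →ₗ[R] A) (h₂ : X₂ →ₗ[R] A) : fibreProd h₁ h₂ →ₗ[R] X₁ :=
  LinearMap.fst R X₁ X₂ ∘ₗ (fibreProd h₁ h₂).subtype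

/-- The second projection `p₂` of the fibre product. -/
def fpSnd {R X₁ X₂ A : Type*} [Semiring R] [AddCommMonoid X₁] [AddCommMonoid X₂]
    [AddCommMonoid A] [Module R X₁] [Module R X₂] [Module R A]
    (h₁ : X₁ →ₗ[R] A) (h₂ : X₂ →ₗ[R] A) : fibreProd h₁ h₂ →ₗ[R] X₂ :=
  LinearMap.snd R X₁ X₂ ∘ₗ (fibreProd h₁ h₂).subtype

/-- On a submodule of a ℤ-module we always use the induced module structure. -/
instance (priority := 10000) submoduleIntModule {M : Type*} [AddCommGroup M] [Module ℤ M]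
    (p : Submodule ℤ M) : Module ℤ p := p.module

/-- On a quotient of a ℤ-module we always use the induced module structure. -/
instance (priority := 10000) quotientIntModule {M : Type*} [AddCommGroup M] [Module ℤ M]
    (p : Submodule ℤ M) : Module ℤ (M ⧸ p) := Submodule.Quotient.module p

/-- On a product of ℤ-modules we always use the product module structure. -/
instance (priority := 10000) prodIntModule {M N : Type*} [AddCommGroup M] [AddCommGroup N]
    [Module ℤ M] [Module ℤ N] : Module ℤ (M × N) := Prod.instModule

section FibreProd

variable {R X₁ X₂ Y₁ Y₂ A B : Type*} [Semiring R] [AddCommMonoid X₁] [AddCommMonoid X₂]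
  [AddCommMonoid Y₁] [AddCommMonoid Y₂] [AddCommMonoid A] [AddCommMonoid B]
  [Module R X₁] [Module R X₂] [Module R Y₁] [Module R Y₂] [Module R A] [Module R B]

theorem mem_fibreProd {h₁ : X₁ →ₗ[R] A} {h₂ : X₂ →ₗ[R] A} {p : X₁ × X₂} :
    p ∈ fibreProd h₁ h₂ ↔ h₁ p.1 = h₂ p.2 :=
  Iff.rfl

theorem map_prodCongr_fibreProd (e₁ : X₁ ≃ₗ[R] Y₁) (e₂ : X₂ ≃ₗ[R] Y₂)
    {α : A →ₗ[R] B} (hα : Function.Injective α)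
    {h₁ : X₁ →ₗ[R] A} {h₂ : X₂ →ₗ[R] A} {k₁ : Y₁ →ₗ[R] B} {k₂ : Y₂ →ₗ[R] B}
    (H₁ : ∀ x, k₁ (e₁ x) = α (h₁ x)) (H₂ : ∀ x, k₂ (e₂ x) = α (h₂ x)) :
    (fibreProd h₁ h₂).map (e₁.prodCongr e₂ : (X₁ × X₂) →ₗ[R] Y₁ × Y₂) = fibreProd k₁ k₂ := by
  ext ⟨y₁, y₂⟩
  rw [Submodule.map_equiv_eq_comap_symm, Submodule.mem_comap, mem_fibreProd, mem_fibreProd]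
  simp only [LinearEquiv.coe_coe, LinearEquiv.prodCongr_symm, LinearEquiv.prodCongr_apply]
  rw [← hα.eq_iff, ← H₁, ← H₂, e₁.apply_symm_apply, e₂.apply_symm_apply]

end FibreProd

theorem double_coset_well_defined_general
    {X T : Type*} [AddCommGroup X] [AddCommGroup T] [Module ℤ X] [Module ℤ T]
    (K : Submodule ℤ X)
    (f : T →ₗ[ℤ] X ⧸ K)
    (ψ₁ ψ₂ ψ ζ : (X ⧸ K) ≃ₗ[ℤ] X ⧸ K)
    (hcomp : ∀ a : X ⧸ K, ψ₁ a = ζ (ψ₂ (ψ a)))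
    (ζt : X ≃ₗ[ℤ] X) (hζ : ∀ x : X, ζ (K.mkQ x) = K.mkQ (ζt x))
    (ψt : T ≃ₗ[ℤ] T) (hψ : ∀ t : T, ψ (f t) = f (ψt t)) :
    Submodule.map ((ζt.symm.prodCongr ψt : (X × T) ≃ₗ[ℤ] X × T) : (X × T) →ₗ[ℤ] X × T)
        (fibreProd K.mkQ (ψ₁.toLinearMap ∘ₗ f)) =
      fibreProd K.mkQ (ψ₂.toLinearMap ∘ₗ f) := by
  -- `ζ̃⁻¹ × ψ̃` intertwines both pairs of structure maps up to the automorphism `ζ⁻¹` of `A`.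
  refine map_prodCongr_fibreProd _ _ (α := ζ.symm.toLinearMap) ζ.symm.injective
    (fun x => ?_) (fun t => ?_)
  · rw [LinearEquiv.coe_coe, ζ.eq_symm_apply, hζ, ζt.apply_symm_apply]
  · simp only [LinearMap.comp_apply, LinearEquiv.coe_coe, ← hψ, hcomp,
      ζ.symm_apply_apply]

/-- Let `X`, `T` be f.g. free ℤ-modules, `K ⊆ X` a submodule of finite
index with projection `h : X → A := X/K`, and `f : T → A` surjective. Let `ψ₁, ψ₂, ψ, ζ`
be automorphisms of `A` with `ψ₁ = ζ ∘ ψ₂ ∘ ψ`, where `ζ` lifts to an automorphism `ζ̃`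
of `X` (`ζ ∘ h = h ∘ ζ̃`) and `ψ` lifts to an automorphism `ψ̃` of `T` (`ψ ∘ f = f ∘ ψ̃`).
Then `(x, t) ↦ (ζ̃⁻¹ x, ψ̃ t)` is a ℤ-module isomorphism from the fibre product
`{(x, t) : h x = ψ₁ (f t)}` onto the fibre product `{(x, t) : h x = ψ₂ (f t)}`. -/
theorem double_coset_well_defined
    {X T : Type*} [AddCommGroup X] [AddCommGroup T] [Module ℤ X] [Module ℤ T]
    [Module.Free ℤ X] [Module.Finite ℤ X] [Module.Free ℤ T] [Module.Finite ℤ T]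
    (K : Submodule ℤ X) [Finite (X ⧸ K)]
    (f : T →ₗ[ℤ] X ⧸ K) (hf : Function.Surjective f)
    (ψ₁ ψ₂ ψ ζ : (X ⧸ K) ≃ₗ[ℤ] X ⧸ K)
    (hcomp : ∀ a : X ⧸ K, ψ₁ a = ζ (ψ₂ (ψ a)))
    (ζt : X ≃ₗ[ℤ] X) (hζ : ∀ x : X, ζ (K.mkQ x) = K.mkQ (ζt x))
    (ψt : T ≃ₗ[ℤ] T) (hψ : ∀ t : T, ψ (f t) = f (ψt t)) :
    Submodule.map ((ζt.symm.prodCongr ψt : (X × T) ≃ₗ[ℤ] X × T) : (X × T) →ₗ[ℤ] X × T)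
        (fibreProd K.mkQ (ψ₁.toLinearMap ∘ₗ f)) =
      fibreProd K.mkQ (ψ₂.toLinearMap ∘ₗ f) :=
  double_coset_well_defined_general K f ψ₁ ψ₂ ψ ζ hcomp ζt hζ ψt hψ
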